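/- arXiv:2412.11853 — 3 statements merged into one kernel-verified Lean document; each statement's English description precedes it below -/
import Mathlib

section
/- For every prime p, the matrices β4r^p((σ1σ2σ1)²) and β4r^p((σ3σ2σ3)²) in GL(3, 𝔽p[t,t⁻¹]) generate a free group of rank 2; that is, the group homomorphism from the free group on two generators x, y to GL(3, 𝔽p[t,t⁻¹]) sending x ↦ β4r^p((σ1σ2σ1)²) and y ↦ β4r^p((σ3σ2σ3)²) is injective. -/
open Matrix LaurentPolynomial

noncomputable section

/-- The braid relations for the braid group `B₄` on three generators
`σ1 = 0`, `σ2 = 1`, `σ3 = 2`. -/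
def braidRels3 : Set (FreeGroup (Fin 3)) :=
  { FreeGroup.of 0 * FreeGroup.of 1 * FreeGroup.of 0 *
      (FreeGroup.of 1 * FreeGroup.of 0 * FreeGroup.of 1)⁻¹,
    FreeGroup.of 1 * FreeGroup.of 2 * FreeGroup.of 1 *
      (FreeGroup.of 2 * FreeGroup.of 1 * FreeGroup.of 2)⁻¹,
    FreeGroup.of 0 * FreeGroup.of 2 * (FreeGroup.of 2 * FreeGroup.of 0)⁻¹ }

/-- The braid group on 4 strands, presented by generators and relations. -/
abbrev B4 : Type := PresentedGroup braidRels3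

/-- The standard generators of `B₄`. -/
def σ (i : Fin 3) : B4 := PresentedGroup.of i

/-- The matrices of the reduced Burau representation of `B₄` on the generators,
over the Laurent polynomial ring `R[t,t⁻¹]`. -/
def burau4r (R : Type) [CommRing R] : Fin 3 → Matrix (Fin 3) (Fin 3) (LaurentPolynomial R)
  | 0 => !![-T 1, 1, 0; 0, 1, 0; 0, 0, 1]
  | 1 => !![1, 0, 0; T 1, -T 1, 1; 0, 0, 1]
  | 2 => !![1, 0, 0; 0, 1, 0; 0, T 1, -T 1]

/-- The braid `b1 = σ1 σ3⁻¹`. -/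
def b1 : B4 := σ 0 * (σ 2)⁻¹

/-- The braid `b2 = σ1 σ2 σ3 σ1⁻¹ σ2⁻¹ σ1⁻¹`. -/
def b2 : B4 := σ 0 * σ 1 * σ 2 * (σ 0)⁻¹ * (σ 1)⁻¹ * (σ 0)⁻¹

/-!
Both matrices fix the line spanned by the second basis vector `e₂`, so they act on the quotient
`𝔽p[t,t⁻¹]³ / ⟨e₂⟩`, through the matrices `[[t³, 1 - t], [0, 1]]` and `[[1, 0], [t² - t³, t³]]`
(rows and columns 1 and 3). It suffices that these two generate a free group, and that is
the ping-pong lemma for their action on nonzero vectors `(f, g)`, with sets cut out by comparing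
`deg f` and `deg g`: the first matrix sends every vector with `3 + deg f ≠ 1 + deg g` to one
with `1 + deg g ≤ deg f`, and the second sends every vector with `deg f ≠ deg g` to one with
`3 + deg f ≤ deg g`. Only leading terms enter, so this works over any nontrivial commutative ring.
-/

universe u

namespace LaurentPolynomial

theorem T_eq_T_one_pow {R : Type*} [Semiring R] (n : ℕ) : (T n : R[T;T⁻¹]) = T 1 ^ n := by
  rw [T_pow, mul_one]

section Degree

variable {R : Type*}

theorem degree_neg [Ring R] (f : R[T;T⁻¹]) : (-f).degree = f.degree :=
  AddMonoidAlgebra.supDegree_neg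

variable [Semiring R]

theorem degree_add_of_degree_ne {f g : R[T;T⁻¹]} (h : f.degree ≠ g.degree) :
    (f + g).degree = f.degree ⊔ g.degree := by
  rcases h.lt_or_gt with h | h
  · rw [sup_eq_right.mpr h.le]; exact AddMonoidAlgebra.supDegree_add_eq_right h
  · rw [sup_eq_left.mpr h.le]; exact AddMonoidAlgebra.supDegree_add_eq_left h

theorem degree_mul_le (f g : R[T;T⁻¹]) : (f * g).degree ≤ f.degree + g.degree :=
  AddMonoidAlgebra.supDegree_mul_le (fun _ _ => WithBot.coe_add _ _)

theorem degree_T_mul [Nontrivial R] (n : ℤ) (f : R[T;T⁻¹]) :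
    (T n * f).degree = n + f.degree := by
  apply le_antisymm
  · simpa using degree_mul_le (T n) f
  have h := degree_mul_le (T (-n)) (T n * f)
  rw [← mul_assoc, ← T_add, neg_add_cancel, T_zero, one_mul, degree_T] at h
  refine (add_le_add_right h n).trans_eq ?_
  rw [← add_assoc, ← WithBot.coe_add, add_neg_cancel, WithBot.coe_zero, zero_add]

end Degree

theorem degree_T_sub_T_mul {R : Type*} [Ring R] [Nontrivial R] {m n : ℤ} (hmn : m < n)
    (f : R[T;T⁻¹]) : ((T m - T n) * f).degree = n + f.degree := by
  obtain rfl | hf := eq_or_ne f 0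
  · simp
  obtain ⟨d, hd⟩ := WithBot.ne_bot_iff_exists.mp (mt degree_eq_bot_iff.mp hf)
  have hlt : (T m * f).degree < (-(T n * f)).degree := by
    rw [degree_neg, degree_T_mul, degree_T_mul, ← hd]; exact_mod_cast by omega
  rw [sub_mul, sub_eq_add_neg, degree_add_of_degree_ne hlt.ne, sup_eq_right.mpr hlt.le, degree_neg,
    degree_T_mul]

end LaurentPolynomial

namespace Matrix.GeneralLinearGroup

variable {n R : Type*} [Fintype n] [DecidableEq n] [CommRing R]

theorem mulVec_ne_zero (g : GL n R) {v : n → R} (hv : v ≠ 0) : g.val *ᵥ v ≠ 0 := by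
  intro h
  apply hv
  rw [← one_mulVec v, ← Units.inv_mul g, ← mulVec_mulVec, h, mulVec_zero]

instance : MulAction (GL n R) {v : n → R // v ≠ 0} where
  smul g v := ⟨g.val *ᵥ v, mulVec_ne_zero g v.2⟩
  one_smul v := Subtype.ext (one_mulVec v.1)
  mul_smul g h v := Subtype.ext (mulVec_mulVec v.1 g.val h.val).symm

theorem inv_apply_eq_zero_of_apply_eq_zero {g : GL n R} {k : n} (hg : ∀ i ≠ k, g i k = 0)
    {i : n} (hi : i ≠ k) : g⁻¹ i k = 0 := by
  have hcol (j : n) : (g⁻¹ * g) j k = g⁻¹ j k * g k k :=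
    (Matrix.mul_apply ..).trans (Finset.sum_eq_single k (fun l _ hl => by rw [hg l hl, mul_zero])
      (by simp))
  have hunit : g⁻¹ k k * g k k = 1 := by
    rw [← hcol, inv_mul_cancel, Units.val_one, one_apply_eq]
  have hzero : g⁻¹ i k * g k k = 0 := by
    rw [← hcol, inv_mul_cancel, Units.val_one, one_apply_ne hi]
  linear_combination g⁻¹ k k * hzero - g⁻¹ i k * hunit

variable (R) in
def basisLineStabilizer (k : n) : Subgroup (GL n R) where
  carrier := {g | ∀ i ≠ k, g i k = 0}
  one_mem' _ hi := one_apply_ne hi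
  mul_mem' {g h} hg hh i hi := by
    simp only [Units.val_mul, Matrix.mul_apply]
    exact Finset.sum_eq_zero fun l _ => by
      obtain rfl | hl := eq_or_ne l k
      · rw [hg i hi, zero_mul]
      · rw [hh l hl, mul_zero]
  inv_mem' hg _ hi := inv_apply_eq_zero_of_apply_eq_zero hg hi

section Quotient

variable {R : Type*} [CommRing R] {n : ℕ}

theorem submatrix_succAbove_mul {k : Fin (n + 1)} {g h : GL (Fin (n + 1)) R}
    (hg : g ∈ basisLineStabilizer R k) :
    ((g * h : GL _ R) : Matrix _ _ R).submatrix k.succAbove k.succAbove =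
      (g : Matrix _ _ R).submatrix k.succAbove k.succAbove *
        (h : Matrix _ _ R).submatrix k.succAbove k.succAbove := by
  ext i j
  simp [Matrix.mul_apply, Fin.sum_univ_succAbove _ k, hg _ (Fin.succAbove_ne k i)]

/-- The action on `R^(n+1) ⧸ R ∙ e k`, written in the basis of the other `e i`. -/
def basisLineQuotient (k : Fin (n + 1)) : basisLineStabilizer R k →* GL (Fin n) R :=
  MonoidHom.toHomUnits
    { toFun g := (g : GL (Fin (n + 1)) R).val.submatrix k.succAbove k.succAbove
      map_one' := by ext i j; simp [one_apply, (Fin.succAbove_right_injective).eq_iff]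
      map_mul' g h := submatrix_succAbove_mul g.2 }

theorem basisLineQuotient_apply (k : Fin (n + 1)) (g : basisLineStabilizer R k) :
    (basisLineQuotient k g).val = (g : GL (Fin (n + 1)) R).val.submatrix k.succAbove k.succAbove :=
  rfl

end Quotient

end Matrix.GeneralLinearGroup

theorem FreeGroup.injective_lift_of_injective_lift_comp {ι G G' : Type*} [Group G] [Group G']
    {H : Subgroup G} (f : H →* G') {a : ι → G} (ha : ∀ i, a i ∈ H)
    (hf : Function.Injective (FreeGroup.lift fun i => f ⟨a i, ha i⟩)) :
    Function.Injective (FreeGroup.lift a) := by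
  have hlift : FreeGroup.lift a = H.subtype.comp (FreeGroup.lift fun i => ⟨a i, ha i⟩) :=
    FreeGroup.ext_hom _ _ fun i => by simp
  have hcomp : FreeGroup.lift (fun i => f ⟨a i, ha i⟩) =
      f.comp (FreeGroup.lift fun i => ⟨a i, ha i⟩) :=
    FreeGroup.ext_hom _ _ fun i => by simp
  rw [hcomp, MonoidHom.coe_comp] at hf
  rw [hlift, MonoidHom.coe_comp]
  exact H.subtype_injective.comp hf.of_comp

theorem FreeGroup.injective_lift_of_ping_pong_of_smul_mem {ι G : Type u} {α : Type*}
    [Nontrivial ι] [Group G] [MulAction G α] (a : ι → G) (X Y : ι → Set α)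
    (hXnonempty : ∀ i, (X i).Nonempty)
    (hXdisj : Pairwise (Function.onFun Disjoint X)) (hYdisj : Pairwise (Function.onFun Disjoint Y))
    (hXYdisj : ∀ i j, Disjoint (X i) (Y j)) (hping : ∀ i v, v ∉ Y i → a i • v ∈ X i) :
    Function.Injective (FreeGroup.lift a) := by
  refine FreeGroup.injective_lift_of_ping_pong a X Y hXnonempty hXdisj hYdisj hXYdisj
    (fun i => Set.smul_set_subset_iff.mpr fun v hv => hping i v hv)
    (fun i => Set.smul_set_subset_iff.mpr fun v hv => by_contra fun h => hv ?_)
  simpa using hping i _ h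

namespace BurauPingPong

variable (R : Type) [CommRing R]

def upperGen : GL (Fin 2) R[T;T⁻¹] :=
  ((isUnit_iff_isUnit_det _).mpr (by simp [isUnit_T] :
    IsUnit (!![T 3, 1 - T 1; 0, 1] : Matrix (Fin 2) (Fin 2) R[T;T⁻¹]).det)).unit

def lowerGen : GL (Fin 2) R[T;T⁻¹] :=
  ((isUnit_iff_isUnit_det _).mpr (by simp [isUnit_T] :
    IsUnit (!![1, 0; T 2 - T 3, T 3] : Matrix (Fin 2) (Fin 2) R[T;T⁻¹]).det)).unit

@[simp] theorem upperGen_val : (upperGen R).val = !![T 3, 1 - T 1; 0, 1] := rfl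
@[simp] theorem lowerGen_val : (lowerGen R).val = !![1, 0; T 2 - T 3, T 3] := rfl

abbrev NonzeroVec : Type := {v : Fin 2 → R[T;T⁻¹] // v ≠ 0}

def attractor : Fin 2 → Set (NonzeroVec R) :=
  ![{v | (1 : ℤ) + (v.1 1).degree ≤ (v.1 0).degree},
    {v | (3 : ℤ) + (v.1 0).degree ≤ (v.1 1).degree}]

def repeller : Fin 2 → Set (NonzeroVec R) :=
  ![{v | (3 : ℤ) + (v.1 0).degree = (1 : ℤ) + (v.1 1).degree},
    {v | (v.1 0).degree = (v.1 1).degree}]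

variable {R}

theorem degree_ne_bot_or (v : NonzeroVec R) : (v.1 0).degree ≠ ⊥ ∨ (v.1 1).degree ≠ ⊥ := by
  by_contra! h
  simp only [degree_eq_bot_iff] at h
  exact v.2 (funext <| Fin.forall_fin_two.mpr h)

theorem disjoint_attractor_repeller :
    Pairwise (Function.onFun Disjoint (attractor R)) ∧
      Pairwise (Function.onFun Disjoint (repeller R)) ∧
        ∀ i j, Disjoint (attractor R i) (repeller R j) := by
  refine ⟨fun i j hij => ?_, fun i j hij => ?_, fun i j => ?_⟩ <;>
    fin_cases i <;> fin_cases j <;> first | exact absurd rfl hij | skip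
  all_goals
    refine Set.disjoint_left.mpr fun v h1 h2 => ?_
    have hv := degree_ne_bot_or v
    simp only [attractor, repeller, Fin.mk_zero, Fin.mk_one, Matrix.cons_val_zero,
      Matrix.cons_val_one, Set.mem_ofPred_eq] at h1 h2
    -- The degree conditions alone allow both degrees to be `⊥`; only `v ≠ 0` excludes that.
    generalize (v.1 0).degree = a at *
    generalize (v.1 1).degree = b at *
    induction a <;> induction b
    all_goals norm_cast at h1 h2 hv
    all_goals simp at h1 h2 hv
    all_goals omega

theorem upperGen_mulVec (v : Fin 2 → R[T;T⁻¹]) :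
    (upperGen R).val *ᵥ v = ![T 3 * v 0 + (T 0 - T 1) * v 1, v 1] := by
  ext i
  fin_cases i <;> simp [mulVec, dotProduct, Fin.sum_univ_two, T_zero]

theorem lowerGen_mulVec (v : Fin 2 → R[T;T⁻¹]) :
    (lowerGen R).val *ᵥ v = ![v 0, (T 2 - T 3) * v 0 + T 3 * v 1] := by
  ext i
  fin_cases i <;> simp [mulVec, dotProduct, Fin.sum_univ_two]

variable [Nontrivial R]

theorem upperGen_smul_mem_attractor {v : NonzeroVec R} (hv : v ∉ repeller R 0) :
    upperGen R • v ∈ attractor R 0 := by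
  have hne : (T 3 * v.1 0).degree ≠ ((T 0 - T 1) * v.1 1).degree := by
    rwa [degree_T_mul, degree_T_sub_T_mul zero_lt_one]
  show (1 : ℤ) + (((upperGen R).val *ᵥ v.1) 1).degree ≤ (((upperGen R).val *ᵥ v.1) 0).degree
  rw [upperGen_mulVec, cons_val_zero, cons_val_one, cons_val_zero, degree_add_of_degree_ne hne,
    ← degree_T_sub_T_mul zero_lt_one]
  exact le_sup_right

theorem lowerGen_smul_mem_attractor {v : NonzeroVec R} (hv : v ∉ repeller R 1) :
    lowerGen R • v ∈ attractor R 1 := by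
  have hne : ((T 2 - T 3) * v.1 0).degree ≠ (T 3 * v.1 1).degree := by
    rw [degree_T_mul, degree_T_sub_T_mul (by norm_num)]
    exact (WithBot.add_left_inj WithBot.coe_ne_bot).not.mpr hv
  show (3 : ℤ) + (((lowerGen R).val *ᵥ v.1) 0).degree ≤ (((lowerGen R).val *ᵥ v.1) 1).degree
  rw [lowerGen_mulVec, cons_val_zero, cons_val_one, cons_val_zero, degree_add_of_degree_ne hne,
    ← degree_T_sub_T_mul (m := 2) (by norm_num)]
  exact le_sup_left

theorem injective_lift_upperGen_lowerGen :
    Function.Injective (FreeGroup.lift ![upperGen R, lowerGen R]) := by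
  obtain ⟨hXdisj, hYdisj, hXYdisj⟩ := disjoint_attractor_repeller (R := R)
  refine FreeGroup.injective_lift_of_ping_pong_of_smul_mem ![upperGen R, lowerGen R]
    (attractor R) (repeller R) ?_ hXdisj hYdisj hXYdisj ?_
  · refine Fin.forall_fin_two.mpr ⟨⟨⟨![1, 0], by simp⟩, ?_⟩, ⟨⟨![0, 1], by simp⟩, ?_⟩⟩ <;>
      simp [attractor]
  · exact Fin.forall_fin_two.mpr
      ⟨fun _ => upperGen_smul_mem_attractor, fun _ => lowerGen_smul_mem_attractor⟩

end BurauPingPong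

section Burau

variable {R : Type} [CommRing R] {β : B4 →* GL (Fin 3) R[T;T⁻¹]}

theorem burau_sq_σ1σ2σ1 (hβ : ∀ i, (β (σ i)).val = burau4r R i) :
    (β ((σ 0 * σ 1 * σ 0) ^ 2)).val = !![T 3, 0, 1 - T 1; 0, T 3, 1 - T 2; 0, 0, 1] := by
  simp only [map_pow, map_mul, Units.val_pow_eq_pow_val, Units.val_mul, hβ]
  rw [show (3 : ℤ) = (3 : ℕ) from rfl, show (2 : ℤ) = (2 : ℕ) from rfl, T_eq_T_one_pow,
    T_eq_T_one_pow]
  simp only [burau4r, sq, mul_fin_three]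
  ext i j : 1
  fin_cases i <;> fin_cases j <;>
    simp only [Fin.zero_eta, Fin.mk_one, Fin.reduceFinMk, of_apply, cons_val, cons_val_zero,
      cons_val_one] <;> ring

theorem burau_sq_σ3σ2σ3 (hβ : ∀ i, (β (σ i)).val = burau4r R i) :
    (β ((σ 2 * σ 1 * σ 2) ^ 2)).val = !![1, 0, 0; T 1 - T 3, T 3, 0; T 2 - T 3, 0, T 3] := by
  simp only [map_pow, map_mul, Units.val_pow_eq_pow_val, Units.val_mul, hβ]
  rw [show (3 : ℤ) = (3 : ℕ) from rfl, show (2 : ℤ) = (2 : ℕ) from rfl, T_eq_T_one_pow,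
    T_eq_T_one_pow]
  simp only [burau4r, sq, mul_fin_three]
  ext i j : 1
  fin_cases i <;> fin_cases j <;>
    simp only [Fin.zero_eta, Fin.mk_one, Fin.reduceFinMk, of_apply, cons_val, cons_val_zero,
      cons_val_one] <;> ring

end Burau

/-- for every prime `p`, the matrices `β4rᵖ((σ1 σ2 σ1)²)` and
`β4rᵖ((σ3 σ2 σ3)²)` generate a free group of rank 2 in `GL(3, 𝔽p[t,t⁻¹])`:
the homomorphism from the free group on two generators sending
`x ↦ β4rᵖ((σ1 σ2 σ1)²)`, `y ↦ β4rᵖ((σ3 σ2 σ3)²)` is injective. -/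
theorem statement6 (p : ℕ) (hp : p.Prime)
    (β : B4 →* GL (Fin 3) (LaurentPolynomial (ZMod p)))
    (hβ : ∀ i, (β (σ i)).val = burau4r (ZMod p) i) :
    Function.Injective
      (FreeGroup.lift ![β ((σ 0 * σ 1 * σ 0) ^ 2), β ((σ 2 * σ 1 * σ 2) ^ 2)] :
        FreeGroup (Fin 2) →* GL (Fin 3) (LaurentPolynomial (ZMod p))) := by
  have : Fact (1 < p) := ⟨hp.one_lt⟩
  have hA := burau_sq_σ1σ2σ1 hβ
  have hB := burau_sq_σ3σ2σ3 hβ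
  generalize β ((σ 0 * σ 1 * σ 0) ^ 2) = A at hA ⊢
  generalize β ((σ 2 * σ 1 * σ 2) ^ 2) = B at hB ⊢
  have hmem : ∀ i, ![A, B] i ∈ GeneralLinearGroup.basisLineStabilizer (ZMod p)[T;T⁻¹] 1 := by
    refine Fin.forall_fin_two.mpr ⟨fun i hi => ?_, fun i hi => ?_⟩ <;> fin_cases i <;> simp_all
  refine FreeGroup.injective_lift_of_injective_lift_comp (GeneralLinearGroup.basisLineQuotient 1)
    hmem ?_
  convert BurauPingPong.injective_lift_upperGen_lowerGen (R := ZMod p) using 2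
  ext i : 1
  refine Units.ext (Matrix.ext fun j k => ?_)
  fin_cases i <;> fin_cases j <;> fin_cases k <;>
    simp [GeneralLinearGroup.basisLineQuotient_apply, hA, hB]
end
end

section
/- For every infinite cardinal κ, there exists a linearly ordered field E such that every nonnegative element of E has a square root in E (i.e. E is a Euclidean field) and the cardinality of E is κ. -/
/-! An ultrapower of `ℝ` indexed by the finite subsets of a linearly ordered set `α` is Euclidean,
and it has at least `#α` elements: counting, inside a finite set, the points below `a` separates
the points `a`. Inside a Euclidean field of size at least `κ`, fix `κ` elements and take the
elements algebraic over the subfield `K` they generate. A square root of an algebraic element is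
algebraic, so this field is again Euclidean, and being algebraic over `K` it has at most
`max #K ℵ₀ = κ` elements. -/

universe u

open Cardinal Filter

def IsEuclideanField (F : Type*) [Field F] [LinearOrder F] : Prop :=
  ∀ x : F, 0 ≤ x → ∃ y : F, y ^ 2 = x

theorem Real.isEuclideanField : IsEuclideanField ℝ :=
  fun x hx => ⟨√x, Real.sq_sqrt hx⟩

theorem Filter.Germ.isEuclideanField {α β : Type*} [Field β] [LinearOrder β]
    (U : Ultrafilter α) (hβ : IsEuclideanField β) : IsEuclideanField (Germ (U : Filter α) β) := by
  intro x hx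
  induction x using Germ.inductionOn with | _ f => ?_
  have hsqrt : ∀ i, ∃ y : β, 0 ≤ f i → y ^ 2 = f i := fun i => by
    by_cases hi : 0 ≤ f i
    · exact (hβ _ hi).imp fun _ hy _ => hy
    · exact ⟨0, fun h => absurd h hi⟩
  choose g hg using hsqrt
  refine ⟨g, ?_⟩
  rw [← Germ.coe_pow, Germ.coe_eq]
  filter_upwards [Germ.coe_nonneg.mp hx] with i hi using hg i hi

theorem Finset.strictMonoOn_card_filter_lt {α : Type*} [LinearOrder α] (s : Finset α) :
    StrictMonoOn (fun a => (s.filter (· < a)).card) s := by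
  intro a ha b _ hab
  refine Finset.card_lt_card ⟨fun x hx => ?_, fun hsub => ?_⟩
  · simp only [Finset.mem_filter] at hx ⊢
    exact ⟨hx.1, hx.2.trans hab⟩
  · simpa using hsub (Finset.mem_filter.mpr ⟨ha, hab⟩)

theorem Filter.Germ.injective_card_filter_lt {α β : Type*} [LinearOrder α] [AddMonoidWithOne β]
    [CharZero β] (U : Ultrafilter (Finset α)) (hU : (U : Filter (Finset α)) ≤ atTop) :
    Function.Injective fun a : α =>
      ((fun s : Finset α => ((s.filter (· < a)).card : β)) : Germ (U : Filter (Finset α)) β) := by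
  intro a b hab
  obtain ⟨s, hs, hab⟩ := ((Germ.coe_eq.mp hab).and (hU (mem_atTop {a, b}))).exists
  simp only [Finset.insert_subset_iff, Finset.singleton_subset_iff] at hab
  exact s.strictMonoOn_card_filter_lt.injOn hab.1 hab.2 (Nat.cast_injective hs)

theorem exists_isEuclideanField_le_mk (κ : Cardinal.{u}) :
    ∃ (G : Type u) (_ : Field G) (_ : LinearOrder G) (_ : IsStrictOrderedRing G),
      IsEuclideanField G ∧ κ ≤ #G := by
  let U : Ultrafilter (Finset κ.ord.ToType) := .of atTop
  refine ⟨Germ (U : Filter (Finset κ.ord.ToType)) ℝ, inferInstance, inferInstance,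
    inferInstance, Germ.isEuclideanField U Real.isEuclideanField, ?_⟩
  have hinj := Germ.injective_card_filter_lt (β := ℝ) U (Ultrafilter.of_le _)
  simpa only [mk_toType, card_ord] using mk_le_of_injective hinj

theorem isEuclideanField_algebraicClosure {K G : Type*} [Field K] [Field G] [LinearOrder G]
    [IsStrictOrderedRing G] [Algebra K G] (hG : IsEuclideanField G) :
    IsEuclideanField (algebraicClosure K G) := by
  intro x hx
  obtain ⟨y, hy⟩ := hG x hx
  have hy_int : IsIntegral K y := .of_pow two_pos (hy ▸ x.2)
  exact ⟨⟨y, hy_int⟩, Subtype.ext hy⟩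

theorem IsEuclideanField.exists_subfield_mk_eq {G : Type u} [Field G] [LinearOrder G]
    [IsStrictOrderedRing G] (hG : IsEuclideanField G) {κ : Cardinal.{u}} (hκ : ℵ₀ ≤ κ)
    (hκG : κ ≤ #G) :
    ∃ (E : Type u) (_ : Field E) (_ : LinearOrder E) (_ : IsStrictOrderedRing E),
      IsEuclideanField E ∧ #E = κ := by
  obtain ⟨s, hs⟩ := le_mk_iff_exists_set.mp hκG
  let K := Subfield.closure s
  refine ⟨algebraicClosure K G, inferInstance, inferInstance, inferInstance,
    isEuclideanField_algebraicClosure hG, le_antisymm ?_ ?_⟩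
  · calc #(algebraicClosure K G) ≤ max #K ℵ₀ := Algebra.IsAlgebraic.cardinalMk_le_max K _
      _ ≤ κ := max_le ((Subfield.cardinalMk_closure_le_max s).trans (max_le hs.le hκ)) hκ
  · rw [← hs]
    exact mk_le_mk_of_subset fun x hx =>
      IntermediateField.algebraMap_mem _ (⟨x, Subfield.subset_closure hx⟩ : K)

/-- for every infinite cardinal `κ` there exists a Euclidean field
(a linearly ordered field in which every nonnegative element is a square)
of cardinality `κ`. -/
theorem statement18 (κ : Cardinal.{u}) (hκ : Cardinal.aleph0 ≤ κ) :
    ∃ (E : Type u) (_ : Field E) (_ : LinearOrder E) (_ : IsStrictOrderedRing E),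
      (∀ x : E, 0 ≤ x → ∃ y : E, y ^ 2 = x) ∧ Cardinal.mk E = κ := by
  obtain ⟨G, _, _, _, hG, hκG⟩ := exists_isEuclideanField_le_mk κ
  exact hG.exists_subfield_mk_eq hκ hκG
end

section
/- Let f2, f3 ∈ ℤ[t,t⁻¹] be Laurent polynomials satisfying f2·bar(f2) + (t⁻¹ + 1 + t)·f3·bar(f3) = 0, where bar is the ring automorphism of ℤ[t,t⁻¹] determined by t ↦ t⁻¹. Then f2 = 0 and f3 = 0. -/
/-!
On the unit circle `bar` becomes complex conjugation and `t⁻¹ + 1 + t` becomes `1 + 2 Re z`,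
so evaluating the identity at `z` with `Re z > -1/2` gives `|f₂(z)|² + (1 + 2 Re z) |f₃(z)|² = 0`
with both coefficients positive. Hence `f₂` and `f₃` vanish on an arc of the circle, i.e. at
infinitely many points, and a Laurent polynomial with infinitely many zeros is zero.
-/
open LaurentPolynomial Complex

namespace LaurentPolynomial

theorem intRingHom_ext {S : Type*} [Semiring S] {f g : ℤ[T;T⁻¹] →+* S}
    (h : f (T 1) = g (T 1)) : f = g :=
  IsLocalization.ringHom_ext (Submonoid.powers (Polynomial.X : Polynomial ℤ)) <|
    Polynomial.ringHom_ext (RingHom.congr_fun (RingHom.ext_int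
      ((f.comp _).comp Polynomial.C) ((g.comp _).comp Polynomial.C)))
      (by simpa [algebraMap_eq_toLaurent] using h)

theorem eq_zero_of_forall_mem_eval₂_eq_zero {R K : Type*} [CommRing R] [CommRing K] [IsDomain K]
    {φ : R →+* K} (hφ : Function.Injective φ) {f : R[T;T⁻¹]} {s : Set Kˣ} (hs : s.Infinite)
    (h : ∀ x ∈ s, eval₂ φ x f = 0) : f = 0 := by
  obtain ⟨n, p, hp⟩ := f.exists_T_pow
  have hroots : (Units.val '' s).Infinite := hs.image Units.val_injective.injOn
  have hpφ : p.map φ = 0 := by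
    refine Polynomial.eq_zero_of_infinite_isRoot _ (hroots.mono ?_)
    rintro _ ⟨x, hx, rfl⟩
    simp [Polynomial.IsRoot, Polynomial.eval_map, ← eval₂_toLaurent, hp, h x hx]
  rw [Polynomial.map_eq_zero_iff hφ] at hpφ
  rw [hpφ, map_zero, eq_comm] at hp
  exact (isUnit_T _).mul_left_eq_zero.mp hp

end LaurentPolynomial

namespace Circle

theorem exp_re (θ : ℝ) : (Circle.exp θ : ℂ).re = Real.cos θ := by
  rw [Circle.coe_exp, exp_ofReal_mul_I_re]

theorem toUnits_injective : Function.Injective Circle.toUnits :=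
  fun _ _ h => Circle.ext (by simpa using congrArg Units.val h)

theorem infinite_setOf_re_pos : {z : Circle | 0 < (z : ℂ).re}.Infinite := by
  have hinj : Set.InjOn Circle.exp (Set.Ioo (-1) 1) :=
    (Circle.exp_injOn_Ioc (by linarith [Real.pi_gt_three])).mono Set.Ioo_subset_Ioc_self
  refine ((Set.Ioo_infinite (by norm_num)).image hinj).mono ?_
  rintro _ ⟨θ, ⟨hθ₁, hθ₂⟩, rfl⟩
  show 0 < (Circle.exp θ : ℂ).re
  rw [Circle.exp_re]
  exact Real.cos_pos_of_mem_Ioo ⟨by linarith [Real.pi_gt_three], by linarith [Real.pi_gt_three]⟩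

end Circle

noncomputable def evalCircle (z : Circle) : ℤ[T;T⁻¹] →+* ℂ :=
  eval₂ (Int.castRingHom ℂ) (Circle.toUnits z)

@[simp]
theorem evalCircle_T (z : Circle) (n : ℤ) : evalCircle z (T n) = (z : ℂ) ^ n := by
  simp [evalCircle]

theorem evalCircle_comp_of_map_T_one {bar : ℤ[T;T⁻¹] →+* ℤ[T;T⁻¹]} (hbar : bar (T 1) = T (-1))
    (z : Circle) : (evalCircle z).comp bar = (starRingEnd ℂ).comp (evalCircle z) :=
  intRingHom_ext <| by simp [hbar, ← Circle.coe_inv_eq_conj]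

theorem evalCircle_T_neg_one_add_one_add_T_one (z : Circle) :
    evalCircle z (T (-1) + 1 + T 1) = ((2 * (z : ℂ).re + 1 : ℝ) : ℂ) := by
  simp only [map_add, map_one, evalCircle_T, zpow_neg_one, zpow_one, ← Circle.coe_inv,
    Circle.coe_inv_eq_conj]
  simp [Complex.ext_iff]
  ring

theorem evalCircle_eq_zero_of_re_gt {bar : ℤ[T;T⁻¹] →+* ℤ[T;T⁻¹]} (hbar : bar (T 1) = T (-1))
    {f₂ f₃ : ℤ[T;T⁻¹]} (h : f₂ * bar f₂ + (T (-1) + 1 + T 1) * (f₃ * bar f₃) = 0)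
    {z : Circle} (hz : -1 / 2 < (z : ℂ).re) : evalCircle z f₂ = 0 ∧ evalCircle z f₃ = 0 := by
  have hbar_eval (f : ℤ[T;T⁻¹]) : evalCircle z (bar f) = starRingEnd ℂ (evalCircle z f) :=
    RingHom.congr_fun (evalCircle_comp_of_map_T_one hbar z) f
  have hnormSq :
      normSq (evalCircle z f₂) + (2 * (z : ℂ).re + 1) * normSq (evalCircle z f₃) = 0 := by
    have := congrArg (evalCircle z) h
    rw [map_add, map_mul, map_mul, map_mul, evalCircle_T_neg_one_add_one_add_T_one, hbar_eval,
      hbar_eval, mul_conj, mul_conj, map_zero] at this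
    exact_mod_cast this
  have h₂ := normSq_nonneg (evalCircle z f₂)
  have h₃ := normSq_nonneg (evalCircle z f₃)
  constructor <;> rw [← normSq_eq_zero] <;> nlinarith

theorem eq_zero_of_forall_re_pos_evalCircle_eq_zero {f : ℤ[T;T⁻¹]}
    (h : ∀ z : Circle, 0 < (z : ℂ).re → evalCircle z f = 0) : f = 0 := by
  refine eq_zero_of_forall_mem_eval₂_eq_zero (φ := Int.castRingHom ℂ) Int.cast_injective
    (Circle.infinite_setOf_re_pos.image Circle.toUnits_injective.injOn) ?_
  rintro _ ⟨z, hz, rfl⟩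
  exact h z hz

/-- if `f2, f3 ∈ ℤ[t,t⁻¹]` satisfy
`f2·bar(f2) + (t⁻¹ + 1 + t)·f3·bar(f3) = 0`, where `bar` is the ring automorphism
of `ℤ[t,t⁻¹]` determined by `t ↦ t⁻¹`, then `f2 = 0` and `f3 = 0`. -/
theorem statement19
    (bar : LaurentPolynomial ℤ →+* LaurentPolynomial ℤ) (hbar : bar (T 1) = T (-1))
    (f2 f3 : LaurentPolynomial ℤ)
    (h : f2 * bar f2 + (T (-1) + 1 + T 1) * (f3 * bar f3) = 0) :
    f2 = 0 ∧ f3 = 0 := by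
  have hzero (z : Circle) (hz : 0 < (z : ℂ).re) :=
    evalCircle_eq_zero_of_re_gt hbar h (z := z) (by linarith)
  exact ⟨eq_zero_of_forall_re_pos_evalCircle_eq_zero fun z hz => (hzero z hz).1,
    eq_zero_of_forall_re_pos_evalCircle_eq_zero fun z hz => (hzero z hz).2⟩
end
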